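/- (Uniqueness of the Gubinelli derivative for truly rough paths.) Let ω be α-Hölder and suppose there is a dense set A ⊂ [0,T) such that for every s ∈ A and every nonzero v ∈ ℝ^d, limsup_{t↓s} |v·ω_{s,t}|/(t−s)^{2α} = ∞. Then any controlled rough path θ with respect to ω has at most one Gubinelli derivative: if (∂_ω θ, R) and (∂'_ω θ, R') both satisfy θ_{s,t} = ∂_ω θ_s ω_{s,t} + R_{s,t} = ∂'_ω θ_s ω_{s,t} + R'_{s,t} with R, R' of order (t−s)^{α+β} and ∂_ω θ, ∂'_ω θ β-Hölder, then ∂_ω θ = ∂'_ω θ. -/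

import Mathlib

/-!
At a point `s` where `ω` is truly rough, the difference `D - D'` of two Gubinelli derivatives
satisfies `(D_s - D'_s) ω_{s,t} = R'_{s,t} - R_{s,t} = O((t - s)^{α+β})`. Testing against a
continuous functional `f` with `f ∘ (D_s - D'_s) = v ≠ 0` would make `|v · ω_{s,t}|` of the same
order, which roughness forbids; so `D = D'` on the dense set `A`. Both derivatives are
`β`-Hölder with `β > 0`, hence continuous, so they agree on the closure `[0, T]` of `A`.
-/

open Set Filter Topology

section TrulyRough

variable {E : Type*} [NormedAddCommGroup E] [NormedSpace ℝ E] {d : ℕ} {ω : ℝ → Fin d → ℝ}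
  {s T γ : ℝ}

theorem eq_zero_of_truly_rough {C : ℝ} {w : Fin d → E}
    (hrough : ∀ v : Fin d → ℝ, v ≠ 0 → ∀ M : ℝ,
      ∃ t, s < t ∧ t ≤ T ∧ M * (t - s) ^ γ < |∑ i, v i * (ω t i - ω s i)|)
    (hw : ∀ t, s < t → t ≤ T → ‖∑ i, (ω t i - ω s i) • w i‖ ≤ C * (t - s) ^ γ) :
    w = 0 := by
  by_contra hw0
  obtain ⟨i, hi⟩ := Function.ne_iff.mp hw0
  obtain ⟨f, hf⟩ := SeparatingDual.exists_ne_zero (R := ℝ) hi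
  have hv : (fun j => f (w j)) ≠ 0 := Function.ne_iff.mpr ⟨i, hf⟩
  obtain ⟨t, hst, htT, hlt⟩ := hrough _ hv (‖f‖ * C)
  have hpair : ∑ j, f (w j) * (ω t j - ω s j) = f (∑ j, (ω t j - ω s j) • w j) := by
    simp [map_sum, mul_comm]
  have hle : |∑ j, f (w j) * (ω t j - ω s j)| ≤ ‖f‖ * C * (t - s) ^ γ := by
    rw [hpair, mul_assoc]
    exact (f.le_opNorm _).trans (mul_le_mul_of_nonneg_left (hw t hst htT) (norm_nonneg f))
  linarith

theorem gubinelli_derivative_eq_of_truly_rough {θ : ℝ → E} {D D' : Fin d → E} {CR CR' : ℝ}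
    (hrough : ∀ v : Fin d → ℝ, v ≠ 0 → ∀ M : ℝ,
      ∃ t, s < t ∧ t ≤ T ∧ M * (t - s) ^ γ < |∑ i, v i * (ω t i - ω s i)|)
    (hR : ∀ t, s < t → t ≤ T →
      ‖θ t - θ s - ∑ i, (ω t i - ω s i) • D i‖ ≤ CR * (t - s) ^ γ)
    (hR' : ∀ t, s < t → t ≤ T →
      ‖θ t - θ s - ∑ i, (ω t i - ω s i) • D' i‖ ≤ CR' * (t - s) ^ γ) :
    D = D' := by
  refine sub_eq_zero.mp (eq_zero_of_truly_rough (C := CR' + CR) hrough fun t hst htT => ?_)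
  have hdiff : ∑ i, (ω t i - ω s i) • (D - D') i
      = (θ t - θ s - ∑ i, (ω t i - ω s i) • D' i) - (θ t - θ s - ∑ i, (ω t i - ω s i) • D i) := by
    simp only [Pi.sub_apply, smul_sub, Finset.sum_sub_distrib]
    abel
  rw [hdiff, add_mul]
  exact (norm_sub_le _ _).trans (add_le_add (hR' t hst htT) (hR t hst htT))

end TrulyRough

theorem continuousOn_Icc_of_forall_norm_sub_le_rpow {F : Type*} [SeminormedAddCommGroup F]
    {f : ℝ → F} {a b C β : ℝ} (hβ : 0 < β)
    (hf : ∀ s t, a ≤ s → s < t → t ≤ b → ‖f t - f s‖ ≤ C * (t - s) ^ β) :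
    ContinuousOn f (Icc a b) := by
  have hlt : ∀ s ∈ Icc a b, ∀ t ∈ Icc a b, s < t → ‖f t - f s‖ ≤ |C| * |t - s| ^ β :=
    fun s hs t ht hst => by
      rw [abs_of_pos (sub_pos.mpr hst)]
      exact (hf s t hs.1 hst ht.2).trans
        (mul_le_mul_of_nonneg_right (le_abs_self C) (Real.rpow_nonneg (sub_pos.mpr hst).le _))
  have hbound : ∀ s ∈ Icc a b, ∀ t ∈ Icc a b, ‖f t - f s‖ ≤ |C| * |t - s| ^ β := by
    intro s hs t ht
    rcases lt_trichotomy s t with hst | rfl | hts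
    · exact hlt s hs t ht hst
    · simp [Real.zero_rpow hβ.ne']
    · rw [norm_sub_rev, abs_sub_comm]
      exact hlt t ht s hs hts
  intro x hx
  rw [ContinuousWithinAt, tendsto_iff_norm_sub_tendsto_zero]
  refine squeeze_zero' (Eventually.of_forall fun _ => norm_nonneg _)
    (eventually_nhdsWithin_of_forall fun y hy => hbound x hx y hy) ?_
  have hcont : Continuous fun y => |C| * |y - x| ^ β :=
    continuous_const.mul ((continuous_id.sub continuous_const).abs.rpow_const
      fun _ => Or.inr hβ.le)
  simpa [Real.zero_rpow hβ.ne'] using (hcont.tendsto x).mono_left nhdsWithin_le_nhds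

theorem Icc_subset_closure_of_dense_in_Ico {A : Set ℝ} {a b : ℝ} (hab : a < b)
    (hdense : ∀ s ∈ Ico a b, ∀ ε > (0 : ℝ), ∃ x ∈ A, |x - s| < ε) :
    Icc a b ⊆ closure A := by
  have hIco : Ico a b ⊆ closure A := fun s hs =>
    Metric.mem_closure_iff.mpr fun ε hε => by
      obtain ⟨x, hxA, hx⟩ := hdense s hs ε hε
      exact ⟨x, hxA, by rwa [Real.dist_eq, abs_sub_comm]⟩
  rw [← closure_Ico hab.ne]
  exact closure_minimal hIco isClosed_closure

theorem gubinelli_derivative_unique_general {E : Type*} [NormedAddCommGroup E] [NormedSpace ℝ E]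
    (d : ℕ) (T α β : ℝ) (hT : 0 < T) (hα2 : α < 1/2)
    (hβ1 : 1 - 2 * α < β)
    (ω : ℝ → Fin d → ℝ) (A : Set ℝ)
    (hAsub : A ⊆ Set.Ico 0 T)
    (hAdense : ∀ s ∈ Set.Ico (0 : ℝ) T, ∀ ε > (0 : ℝ), ∃ a ∈ A, |a - s| < ε)
    (hrough : ∀ s ∈ A, ∀ v : Fin d → ℝ, v ≠ 0 → ∀ M : ℝ, ∀ ε > (0 : ℝ),
      ∃ t : ℝ, s < t ∧ t ≤ T ∧ t - s < ε ∧
        M * (t - s) ^ (α + β) < |∑ i, v i * (ω t i - ω s i)|)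
    (θ : ℝ → E) (Dθ Dθ' : ℝ → Fin d → E) (Cβ Cβ' CR CR' : ℝ)
    (hDβ : ∀ s t : ℝ, 0 ≤ s → s < t → t ≤ T → ‖Dθ t - Dθ s‖ ≤ Cβ * (t - s) ^ β)
    (hDβ' : ∀ s t : ℝ, 0 ≤ s → s < t → t ≤ T → ‖Dθ' t - Dθ' s‖ ≤ Cβ' * (t - s) ^ β)
    (hR : ∀ s t : ℝ, 0 ≤ s → s < t → t ≤ T →
      ‖θ t - θ s - ∑ i, (ω t i - ω s i) • Dθ s i‖ ≤ CR * (t - s) ^ (α + β))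
    (hR' : ∀ s t : ℝ, 0 ≤ s → s < t → t ≤ T →
      ‖θ t - θ s - ∑ i, (ω t i - ω s i) • Dθ' s i‖ ≤ CR' * (t - s) ^ (α + β)) :
    ∀ t : ℝ, 0 ≤ t → t ≤ T → Dθ t = Dθ' t := by
  intro t ht0 htT
  have hβ : 0 < β := by linarith
  have hA : EqOn Dθ Dθ' A := fun s hs =>
    have hs0 : 0 ≤ s := (hAsub hs).1
    gubinelli_derivative_eq_of_truly_rough
      (fun v hv M =>
        let ⟨t, hst, htT, _, hlt⟩ := hrough s hs v hv M 1 one_pos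
        ⟨t, hst, htT, hlt⟩)
      (hR s · hs0) (hR' s · hs0)
  exact hA.of_subset_closure (continuousOn_Icc_of_forall_norm_sub_le_rpow hβ hDβ)
    (continuousOn_Icc_of_forall_norm_sub_le_rpow hβ hDβ') (hAsub.trans Ico_subset_Icc_self)
    (Icc_subset_closure_of_dense_in_Ico hT hAdense) ⟨ht0, htT⟩

/-- uniqueness of the Gubinelli derivative for truly rough paths.
The truly rough condition is stated with exponent `α+β` (as sanctioned in the context),
i.e. for `s` in a dense subset of `[0,T)` and every nonzero `v`,
`limsup_{t↓s} |v·ω_{s,t}|/(t−s)^{α+β} = ∞`. -/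
theorem gubinelli_derivative_unique {E : Type*} [NormedAddCommGroup E] [NormedSpace ℝ E]
    (d : ℕ) (T α β : ℝ) (hT : 0 < T) (hα1 : 1/3 < α) (hα2 : α < 1/2)
    (hβ1 : 1 - 2 * α < β) (hβ2 : β ≤ α)
    (ω : ℝ → Fin d → ℝ) (A : Set ℝ)
    (hAsub : A ⊆ Set.Ico 0 T)
    (hAdense : ∀ s ∈ Set.Ico (0 : ℝ) T, ∀ ε > (0 : ℝ), ∃ a ∈ A, |a - s| < ε)
    (hrough : ∀ s ∈ A, ∀ v : Fin d → ℝ, v ≠ 0 → ∀ M : ℝ, ∀ ε > (0 : ℝ),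
      ∃ t : ℝ, s < t ∧ t ≤ T ∧ t - s < ε ∧
        M * (t - s) ^ (α + β) < |∑ i, v i * (ω t i - ω s i)|)
    (θ : ℝ → E) (Dθ Dθ' : ℝ → Fin d → E) (Cβ Cβ' CR CR' : ℝ)
    (hDβ : ∀ s t : ℝ, 0 ≤ s → s < t → t ≤ T → ‖Dθ t - Dθ s‖ ≤ Cβ * (t - s) ^ β)
    (hDβ' : ∀ s t : ℝ, 0 ≤ s → s < t → t ≤ T → ‖Dθ' t - Dθ' s‖ ≤ Cβ' * (t - s) ^ β)
    (hR : ∀ s t : ℝ, 0 ≤ s → s < t → t ≤ T →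
      ‖θ t - θ s - ∑ i, (ω t i - ω s i) • Dθ s i‖ ≤ CR * (t - s) ^ (α + β))
    (hR' : ∀ s t : ℝ, 0 ≤ s → s < t → t ≤ T →
      ‖θ t - θ s - ∑ i, (ω t i - ω s i) • Dθ' s i‖ ≤ CR' * (t - s) ^ (α + β)) :
    ∀ t : ℝ, 0 ≤ t → t ≤ T → Dθ t = Dθ' t :=
  gubinelli_derivative_unique_general d T α β hT hα2 hβ1 ω A hAsub hAdense hrough θ Dθ Dθ' Cβ Cβ' CR
    CR' hDβ hDβ' hR hR'
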